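/- arXiv:1202.0745 — 2 statements merged into one kernel-verified Lean document; each statement's English description precedes it below -/
import Mathlib

section
/- The injective hull E = E_R(k) is a semidualizing R-module if and only if R is an artinian ring, and this holds if and only if E is a noetherian R-module. -/
/-!
Setting: `R` is a commutative noetherian local ring with maximal ideal `m` and residue
field `k = R/m`; `E = E_R(k)` is the injective hull of `k`; `(-)^∨ = Hom_R(-, E)` is the
Matlis duality functor; `R̂ = AdicCompletion (maximalIdeal R) R` is the `m`-adic completion.
-/

open CategoryTheory IsLocalRing TensorProduct

noncomputable section

/-- The `i`-th Ext module `Ext^i_R(M, N)`. -/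
abbrev extMod (R : Type) [CommRing R] (M N : Type) [AddCommGroup M] [Module R M]
    [AddCommGroup N] [Module R N] (i : ℕ) : ModuleCat R :=
  ((Ext R (ModuleCat R) i).obj (Opposite.op (ModuleCat.of R M))).obj (ModuleCat.of R N)

/-- `E` is an injective hull of the residue field `k = R/m`: it is an injective module
containing `k` as an essential submodule. -/
def IsInjectiveHullOfResidueField (R : Type) [CommRing R] [IsLocalRing R]
    (E : Type) [AddCommGroup E] [Module R E] : Prop :=
  Module.Injective R E ∧
  ∃ f : ResidueField R →ₗ[R] E, Function.Injective f ∧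
    ∀ N : Submodule R E, N ≠ ⊥ → N ⊓ LinearMap.range f ≠ ⊥

/-- The natural biduality (evaluation) map `L → Hom_R(Hom_R(L, M), M)`, `l ↦ (φ ↦ φ l)`. -/
abbrev evalMap (R : Type) [CommRing R] (M L : Type) [AddCommGroup M] [Module R M]
    [AddCommGroup L] [Module R L] : L →ₗ[R] ((L →ₗ[R] M) →ₗ[R] M) :=
  LinearMap.applyₗ

/-- `L` is Matlis reflexive: the biduality map `L → L^∨∨` is an isomorphism. -/
def IsMatlisReflexive (R : Type) [CommRing R] (E L : Type) [AddCommGroup E] [Module R E]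
    [AddCommGroup L] [Module R L] : Prop :=
  Function.Bijective (evalMap R E L)

/-- A finitely generated `R`-module `C` is semidualizing if the homothety map
`R → Hom_R(C,C)`, `r ↦ (c ↦ r c)`, is an isomorphism and `Ext^i_R(C,C) = 0` for all
`i > 0`.  (Note `Module.End R C = C →ₗ[R] C` and `algebraMap R (Module.End R C)` is the
homothety map.) -/
def IsSemidualizing (R : Type) [CommRing R] (C : Type) [AddCommGroup C] [Module R C] : Prop :=
  Module.Finite R C ∧
  Function.Bijective (algebraMap R (Module.End R C)) ∧
  ∀ i : ℕ, 0 < i → Subsingleton (extMod R C C i)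

/-- An artinian `R`-module `T` is quasidualizing if the homothety map
`χ : R̂ → Hom_R(T,T)`, `x ↦ (t ↦ x • t)`, is an isomorphism and `Ext^i_R(T,T) = 0` for all
`i > 0`.  Here `T` is endowed with its natural `R̂`-module structure, recorded as a
`Module R̂ T` instance compatible with the `R`-structure (such a compatible structure is
unique for an artinian module, since artinian modules are `m`-power torsion). -/
def IsQuasidualizing (R : Type) [CommRing R] [IsLocalRing R]
    (T : Type) [AddCommGroup T] [Module R T]
    [Module (AdicCompletion (maximalIdeal R) R) T]
    [IsScalarTower R (AdicCompletion (maximalIdeal R) R) T] : Prop :=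
  IsArtinian R T ∧
  Function.Bijective (fun x : AdicCompletion (maximalIdeal R) R =>
    (LinearMap.lsmul (AdicCompletion (maximalIdeal R) R) T x).restrictScalars R) ∧
  ∀ i : ℕ, 0 < i → Subsingleton (extMod R T T i)

/-
`E` is injective and contains `k`, so it is a faithful `R`-module; `k` is essential in `E`, so
it is the socle of `E` and lies in every nonzero submodule. If `E` is finitely generated,
Krull's intersection theorem therefore gives `m ^ n • E = 0` for some `n`, so `m` is nilpotent and
`R` is artinian. Conversely, if `m ^ n = 0` then `E` is exhausted by its `m ^ i`-torsion
submodules, and `x ↦ (a ↦ a • x)` embeds each successive quotient into `Hom(m ^ i, k)`, so `E` is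
noetherian. For artinian `R`, the homothety `R → End(E) ≅ Hom(Hom(R, E), E)` is the biduality
map of `R`, which is injective by faithfulness and surjective because biduality is surjective
on `k` and, `Hom(-, E)` being exact, on every module of finite length. Finally `Ext^i(-, E)`
vanishes for `i > 0` since `E` is injective.
-/

namespace Module.Injective

variable {R : Type} [CommRing R] {E : Type} [AddCommGroup E] [Module R E] [Module.Injective R E]
variable {A B C : Type} [AddCommGroup A] [Module R A] [AddCommGroup B] [Module R B]
  [AddCommGroup C] [Module R C]

theorem exists_comp_eq_of_ker_le (u : A →ₗ[R] B) (x : A →ₗ[R] E)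
    (h : LinearMap.ker u ≤ LinearMap.ker x) : ∃ y : B →ₗ[R] E, y ∘ₗ u = x := by
  obtain ⟨y, hy⟩ := extension_property R E _ B ((LinearMap.ker u).liftQ u le_rfl)
    (LinearMap.ker_eq_bot.mp (Submodule.ker_liftQ_eq_bot _ _ _ le_rfl))
    ((LinearMap.ker u).liftQ x h)
  refine ⟨y, LinearMap.ext fun a => ?_⟩
  simpa using LinearMap.congr_fun hy (Submodule.Quotient.mk a)

theorem exact_lcomp {f : A →ₗ[R] B} {g : B →ₗ[R] C} (hfg : Function.Exact f g) :
    Function.Exact (LinearMap.lcomp R E g) (LinearMap.lcomp R E f) := by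
  intro h
  refine ⟨fun hh => ?_, ?_⟩
  · refine exists_comp_eq_of_ker_le g h fun b hb => ?_
    obtain ⟨a, rfl⟩ := (hfg b).mp hb
    exact LinearMap.congr_fun hh a
  · rintro ⟨y, rfl⟩
    ext a
    simp [hfg.apply_apply_eq_zero]

end Module.Injective

theorem subsingleton_extMod_of_injective {R : Type} [CommRing R] (M : Type) [AddCommGroup M]
    [Module R M] {E : Type} [AddCommGroup E] [Module R E] [Module.Injective R E]
    (i : ℕ) (hi : 0 < i) : Subsingleton (extMod R M E i) := by
  obtain ⟨j, rfl⟩ := Nat.exists_eq_add_one_of_ne_zero hi.ne'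
  let P := ProjectiveResolution.of (ModuleCat.of R M)
  let K := P.complex.linearYonedaObj R (ModuleCat.of R E)
  suffices hK : K.ExactAt (j + 1) from
    ModuleCat.subsingleton_of_isZero
      ((HomologicalComplex.exactAt_iff_isZero_homology _ _).mp hK |>.of_iso (P.isoExt _ _))
  rw [HomologicalComplex.exactAt_iff' K j (j + 1) (j + 2) (by simp) (by simp),
    ShortComplex.moduleCat_exact_iff]
  intro x hx
  have hdx : P.complex.d (j + 2) (j + 1) ≫ x = 0 := by
    change K.d (j + 1) (j + 2) x = 0 at hx
    rwa [ChainComplex.linearYonedaObj_d] at hx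
  have hP := P.complex_exactAt_succ j
  rw [HomologicalComplex.exactAt_iff' P.complex (j + 2) (j + 1) j (by simp) (by simp),
    ShortComplex.moduleCat_exact_iff_ker_sub_range] at hP
  obtain ⟨y, hy⟩ := Module.Injective.exists_comp_eq_of_ker_le (P.complex.d (j + 1) j).hom x.hom
    fun z hz => by
      obtain ⟨w, rfl⟩ := hP hz
      exact ConcreteCategory.congr_hom hdx w
  refine ⟨ModuleCat.ofHom y, ?_⟩
  change K.d j (j + 1) (ModuleCat.ofHom y) = x
  rw [ChainComplex.linearYonedaObj_d]
  exact ModuleCat.hom_ext hy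

section Biduality

variable {R : Type} [CommRing R] {E : Type} [AddCommGroup E] [Module R E]

theorem evalMap_surjective_of_exact [Module.Injective R E] {N M Q : Type} [AddCommGroup N]
    [Module R N] [AddCommGroup M] [Module R M] [AddCommGroup Q] [Module R Q]
    {ι : N →ₗ[R] M} {π : M →ₗ[R] Q} (hιπ : Function.Exact ι π) (hπ : Function.Surjective π)
    (hN : Function.Surjective (evalMap R E N)) (hQ : Function.Surjective (evalMap R E Q)) :
    Function.Surjective (evalMap R E M) := by
  intro ξ
  obtain ⟨q, hq⟩ := hQ (ξ ∘ₗ LinearMap.lcomp R E π)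
  obtain ⟨m, rfl⟩ := hπ q
  have hbidual := Module.Injective.exact_lcomp (E := E)
    (Module.Injective.exact_lcomp (E := E) hιπ)
  obtain ⟨η, hη⟩ := (hbidual (ξ - evalMap R E M m)).mp <| by
    ext φ
    simpa [sub_eq_zero] using (LinearMap.congr_fun hq φ).symm
  obtain ⟨n, rfl⟩ := hN η
  refine ⟨m + ι n, LinearMap.ext fun φ => ?_⟩
  simpa [eq_sub_iff_add_eq'] using LinearMap.congr_fun hη φ

theorem algebraMap_end_surjective_of_evalMap_surjective (h : Function.Surjective (evalMap R E R)) :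
    Function.Surjective (algebraMap R (Module.End R E)) := by
  intro φ
  obtain ⟨r, hr⟩ := h (φ ∘ₗ (LinearMap.ringLmapEquivSelf R R E).toLinearMap)
  exact ⟨r, LinearMap.ext fun e => by
    simpa using LinearMap.congr_fun hr (LinearMap.toSpanSingleton R E e)⟩

end Biduality

theorem isNoetherian_torsionBySet_pow {R M : Type} [CommRing R] [IsNoetherianRing R]
    [AddCommGroup M] [Module R M] (I : Ideal R)
    [IsNoetherian R (Submodule.torsionBySet R M I)] (i : ℕ) :
    IsNoetherian R (Submodule.torsionBySet R M ↑(I ^ i)) := by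
  induction i with
  | zero =>
    have : Submodule.torsionBySet R M ↑(I ^ 0) = ⊥ := eq_bot_iff.mpr fun x hx => by
      simpa using (Submodule.mem_torsionBySet_iff _ _).mp hx ⟨1, by simp⟩
    rw [this]
    infer_instance
  | succ i ih =>
    -- `x ↦ (a ↦ a • x)` maps the `I ^ (i + 1)`-torsion to `Hom(I ^ i, I-torsion)`,
    -- with kernel the `I ^ i`-torsion
    have hmem (x : Submodule.torsionBySet R M ↑(I ^ (i + 1))) (a : ↥(I ^ i)) :
        (a : R) • (x : M) ∈ Submodule.torsionBySet R M I := by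
      refine (Submodule.mem_torsionBySet_iff _ _).mpr fun ⟨b, hb⟩ => ?_
      rw [smul_smul]
      exact (Submodule.mem_torsionBySet_iff _ _).mp x.2
        ⟨b * a, by rw [pow_succ']; exact Ideal.mul_mem_mul hb a.2⟩
    let Φ : Submodule.torsionBySet R M ↑(I ^ (i + 1)) →ₗ[R]
        (I ^ i : Ideal R) →ₗ[R] Submodule.torsionBySet R M I :=
      LinearMap.mk₂ R (fun x a => ⟨(a : R) • (x : M), hmem x a⟩)
        (fun _ _ _ => Subtype.ext (smul_add _ _ _)) (fun _ _ _ => Subtype.ext (smul_comm _ _ _))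
        (fun _ _ _ => Subtype.ext (add_smul _ _ _)) (fun _ _ _ => Subtype.ext (mul_smul _ _ _))
    have hle : Submodule.torsionBySet R M ↑(I ^ i) ≤ Submodule.torsionBySet R M ↑(I ^ (i + 1)) :=
      Submodule.torsionBySet_le_torsionBySet_of_subset (Ideal.pow_le_pow_right i.le_succ)
    refine isNoetherian_of_range_eq_ker (Submodule.inclusion hle) Φ ?_
    ext x
    simp only [Submodule.range_inclusion, Submodule.mem_comap, Submodule.mem_torsionBySet_iff,
      LinearMap.mem_ker, LinearMap.ext_iff, Subtype.ext_iff]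
    simp [Φ]

def Submodule.IsEssential {R M : Type} [Semiring R] [AddCommMonoid M] [Module R M]
    (N : Submodule R M) : Prop :=
  ∀ N' : Submodule R M, N' ≠ ⊥ → N' ⊓ N ≠ ⊥

namespace IsLocalRing

variable {R : Type} [CommRing R] [IsLocalRing R]

theorem ResidueField.smul_eq_zero {r : R} (hr : r ∈ maximalIdeal R) (c : ResidueField R) :
    r • c = 0 := by
  rw [Algebra.smul_def, ResidueField.algebraMap_eq, (residue_eq_zero_iff r).mpr hr, zero_mul]

theorem ResidueField.linearMap_ext {M : Type} [AddCommGroup M] [Module R M]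
    {φ ψ : ResidueField R →ₗ[R] M} (h : φ 1 = ψ 1) : φ = ψ := by
  ext c
  obtain ⟨r, rfl⟩ := residue_surjective c
  rw [← ResidueField.algebraMap_eq, Algebra.algebraMap_eq_smul_one, map_smul, map_smul, h]

variable {E : Type} [AddCommGroup E] [Module R E] {f : ResidueField R →ₗ[R] E}

theorem mem_range_of_forall_smul_eq_zero (hess : (LinearMap.range f).IsEssential) {x : E}
    (hx : ∀ r ∈ maximalIdeal R, r • x = 0) : x ∈ LinearMap.range f := by
  obtain rfl | hx0 := eq_or_ne x 0
  · exact zero_mem _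
  obtain ⟨y, hy, hy0⟩ := Submodule.exists_mem_ne_zero_of_ne_bot
    (hess (R ∙ x) (by simpa [Submodule.span_singleton_eq_bot] using hx0))
  obtain ⟨⟨a, rfl⟩, hyf⟩ := Submodule.mem_inf.mp hy |>.imp_left Submodule.mem_span_singleton.mp
  -- `a • x ≠ 0` forces `a` to be a unit, so `x` lies in the submodule generated by `a • x`
  have ha : IsUnit a := by
    by_contra h
    exact hy0 (hx a ((mem_maximalIdeal a).mpr h))
  simpa [smul_smul] using Submodule.smul_mem _ ((ha.unit⁻¹ : Rˣ) : R) hyf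

theorem range_le_of_ne_bot (hess : (LinearMap.range f).IsEssential) {N : Submodule R E}
    (hN : N ≠ ⊥) : LinearMap.range f ≤ N := by
  obtain ⟨y, hy, hy0⟩ := Submodule.exists_mem_ne_zero_of_ne_bot (hess N hN)
  obtain ⟨hyN, c, rfl⟩ := Submodule.mem_inf.mp hy
  have hc : c ≠ 0 := by rintro rfl; exact hy0 (map_zero f)
  rintro _ ⟨d, rfl⟩
  obtain ⟨r, hr⟩ := residue_surjective (d * c⁻¹)
  have hd : d = r • c := by
    rw [Algebra.smul_def, ResidueField.algebraMap_eq, hr, inv_mul_cancel_right₀ hc]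
  rw [hd, map_smul]
  exact N.smul_mem r hyN

theorem evalMap_residueField_surjective (hess : (LinearMap.range f).IsEssential) :
    Function.Surjective (evalMap R E (ResidueField R)) := by
  have hsocle : ∀ φ : ResidueField R →ₗ[R] E, ∃ s : R, φ = s • f := by
    intro φ
    obtain ⟨c, hc⟩ := mem_range_of_forall_smul_eq_zero hess (x := φ 1) fun r hr => by
      rw [← map_smul, ResidueField.smul_eq_zero hr, map_zero]
    obtain ⟨s, rfl⟩ := residue_surjective c
    refine ⟨s, ResidueField.linearMap_ext ?_⟩
    rw [← hc, LinearMap.smul_apply, ← map_smul, ← ResidueField.algebraMap_eq,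
      Algebra.algebraMap_eq_smul_one]
  intro ξ
  obtain ⟨c, hc⟩ := mem_range_of_forall_smul_eq_zero hess (x := ξ f) fun r hr => by
    have hrf : r • f = 0 := LinearMap.ext fun c => by
      rw [LinearMap.smul_apply, ← map_smul, ResidueField.smul_eq_zero hr, map_zero,
        LinearMap.zero_apply]
    rw [← map_smul, hrf, map_zero]
  refine ⟨c, LinearMap.ext fun φ => ?_⟩
  obtain ⟨s, rfl⟩ := hsocle φ
  simp [hc]

theorem evalMap_surjective_of_isFiniteLength [Module.Injective R E]
    (hess : (LinearMap.range f).IsEssential) {M : Type} [AddCommGroup M] [Module R M]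
    (hM : IsFiniteLength R M) : Function.Surjective (evalMap R E M) := by
  induction hM with
  | of_subsingleton =>
    exact fun ξ => ⟨0, LinearMap.ext fun φ => by simp [Subsingleton.elim φ 0]⟩
  | @of_simple_quotient M _ _ N _ _ ih =>
    obtain ⟨I, hI, ⟨e⟩⟩ := isSimpleModule_iff_quot_maximal.mp ‹IsSimpleModule R (M ⧸ N)›
    obtain rfl := eq_maximalIdeal hI
    let e' : (M ⧸ N) ≃ₗ[R] ResidueField R := e
    exact evalMap_surjective_of_exact (ι := N.subtype) (π := e'.toLinearMap ∘ₗ N.mkQ)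
      (LinearEquiv.postcomp_exact_iff_exact.mpr (LinearMap.exact_subtype_mkQ N))
      (e'.surjective.comp N.mkQ_surjective) ih (evalMap_residueField_surjective hess)

theorem faithfulSMul_of_injective [Module.Injective R E] {e : E} (he : e ≠ 0)
    (hm : ∀ r ∈ maximalIdeal R, r • e = 0) : FaithfulSMul R E := by
  refine Module.annihilator_eq_bot.mp (eq_bot_iff.mpr fun r hr => ?_)
  have hr : ∀ x : E, r • x = 0 := fun x => Module.mem_annihilator.mp hr x
  by_contra hr0
  -- `r ↦ e` extends to `R → E`, because the annihilator of `r` lies in `maximalIdeal R`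
  obtain ⟨y, hy⟩ := Module.Injective.exists_comp_eq_of_ker_le (LinearMap.toSpanSingleton R R r)
    (LinearMap.toSpanSingleton R E e) fun a (ha : a • r = 0) =>
      hm a ((mem_maximalIdeal a).mpr fun hu => hr0 (hu.smul_eq_zero.mp ha))
  have hye : y r = e := by simpa using LinearMap.congr_fun hy 1
  apply he
  simpa [← hye, ← map_smul] using hr (y 1)

theorem exists_pow_smul_top_eq_bot [IsNoetherianRing R] [Module.Finite R E]
    (hf : Function.Injective f) (hess : (LinearMap.range f).IsEssential) :
    ∃ n : ℕ, maximalIdeal R ^ n • (⊤ : Submodule R E) = ⊥ := by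
  by_contra! h
  have hf1 : f 1 ∈ ⨅ n : ℕ, maximalIdeal R ^ n • (⊤ : Submodule R E) :=
    Submodule.mem_iInf _ |>.mpr fun n =>
      range_le_of_ne_bot hess (h n) (LinearMap.mem_range_self f 1)
  rw [Ideal.iInf_pow_smul_eq_bot_of_isLocalRing _ (maximalIdeal.isMaximal R).ne_top,
    Submodule.mem_bot, ← map_zero f] at hf1
  exact one_ne_zero (hf hf1)

theorem isArtinianRing_of_finite [IsNoetherianRing R] [Module.Finite R E] [FaithfulSMul R E]
    (hf : Function.Injective f) (hess : (LinearMap.range f).IsEssential) : IsArtinianRing R := by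
  obtain ⟨n, hn⟩ := exists_pow_smul_top_eq_bot hf hess
  refine (isArtinianRing_iff_isNilpotent_maximalIdeal R).mpr ⟨n, le_bot_iff.mp ?_⟩
  rw [← Submodule.le_annihilator_iff, Submodule.annihilator_top,
    Module.annihilator_eq_bot.mpr ‹_›] at hn
  exact hn

theorem isNoetherian_of_isArtinianRing [IsArtinianRing R]
    (hess : (LinearMap.range f).IsEssential) : IsNoetherian R E := by
  obtain ⟨n, hn⟩ := (isArtinianRing_iff_isNilpotent_maximalIdeal R).mp ‹_›
  have : IsNoetherian R (Submodule.torsionBySet R E (maximalIdeal R)) :=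
    isNoetherian_of_le fun x hx => mem_range_of_forall_smul_eq_zero hess fun r hr =>
      (Submodule.mem_torsionBySet_iff _ _).mp hx ⟨r, hr⟩
  have htop : Submodule.torsionBySet R E ↑(maximalIdeal R ^ n) = ⊤ := by
    refine eq_top_iff.mpr fun x _ => (Submodule.mem_torsionBySet_iff _ _).mpr fun ⟨a, ha⟩ => ?_
    obtain rfl : a = 0 := by simpa [hn] using ha
    exact zero_smul R x
  have := isNoetherian_torsionBySet_pow (M := E) (maximalIdeal R) n
  rw [htop] at this
  exact isNoetherian_top_iff.mp this

theorem isSemidualizing_of_isArtinianRing [IsArtinianRing R] [Module.Injective R E]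
    [FaithfulSMul R E] (hess : (LinearMap.range f).IsEssential) : IsSemidualizing R E := by
  have := isNoetherian_of_isArtinianRing hess
  refine ⟨inferInstance, ⟨fun a b hab => ?_, ?_⟩, fun i => subsingleton_extMod_of_injective E i⟩
  · exact FaithfulSMul.eq_of_smul_eq_smul fun x => LinearMap.congr_fun hab x
  · exact algebraMap_end_surjective_of_evalMap_surjective
      (evalMap_surjective_of_isFiniteLength hess ((isArtinianRing_iff_isFiniteLength R).mp ‹_›))

end IsLocalRing

/-- **(Part of Proposition 2.2.)**  The injective hull `E = E_R(k)` is a semidualizing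
`R`-module if and only if `R` is an artinian ring, and this holds if and only if `E`
is a noetherian `R`-module. -/
theorem isSemidualizing_injectiveHull_iff
    (R : Type) [CommRing R] [IsNoetherianRing R] [IsLocalRing R]
    (E : Type) [AddCommGroup E] [Module R E]
    (hE : IsInjectiveHullOfResidueField R E) :
    (IsSemidualizing R E ↔ IsArtinianRing R) ∧
    (IsSemidualizing R E ↔ IsNoetherian R E) := by
  obtain ⟨_, f, hf, hess⟩ := hE
  have : FaithfulSMul R E := faithfulSMul_of_injective ((map_ne_zero_iff f hf).mpr one_ne_zero)
    fun r hr => by rw [← map_smul, ResidueField.smul_eq_zero hr, map_zero]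
  have artinian_of_finite (_ : Module.Finite R E) : IsArtinianRing R :=
    isArtinianRing_of_finite hf hess
  have semidualizing (_ : IsArtinianRing R) : IsSemidualizing R E :=
    isSemidualizing_of_isArtinianRing hess
  refine ⟨⟨fun h => artinian_of_finite h.1, semidualizing⟩,
    ⟨fun h => ?_, fun _ => semidualizing (artinian_of_finite inferInstance)⟩⟩
  have := artinian_of_finite h.1
  exact isNoetherian_of_isArtinianRing hess
end
end

section
/- If there exists an R-module L that is both semidualizing and quasidualizing, then R is an artinian ring. (Indeed, such an L is both noetherian and artinian, hence of finite length with Supp_R(L) ⊆ {m}, while Ann_R(L) = 0 forces Supp_R(L) = Spec(R), so Spec(R) = {m}.) -/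
/-!
Setting: `R` is a commutative noetherian local ring with maximal ideal `m` and residue
field `k = R/m`; `E = E_R(k)` is the injective hull of `k`; `(-)^∨ = Hom_R(-, E)` is the
Matlis duality functor; `R̂ = AdicCompletion (maximalIdeal R) R` is the `m`-adic completion.
-/

open CategoryTheory IsLocalRing TensorProduct

noncomputable section

/-!
A semidualizing module `L` is finitely generated and faithful (the homothety `R → End_R(L)` is
injective), so a generating family `s₁, …, sₙ` gives an embedding `R ↪ Lⁿ`, `r ↦ (r sᵢ)ᵢ`.
A quasidualizing module is artinian, hence so is `Lⁿ` and with it `R`.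
-/

section

open Submodule LinearMap

variable {R M : Type*}

theorem faithfulSMul_of_injective_algebraMap_end [CommSemiring R] [AddCommMonoid M] [Module R M]
    (h : Function.Injective (algebraMap R (Module.End R M))) : FaithfulSMul R M :=
  ⟨fun hrs => h (LinearMap.ext hrs)⟩

variable [CommRing R] [AddCommGroup M] [Module R M]

theorem ker_pi_toSpanSingleton_eq_annihilator {ι : Type*} {s : ι → M}
    (hs : span R (Set.range s) = ⊤) :
    ker (LinearMap.pi fun i => toSpanSingleton R M (s i)) = Module.annihilator R M := by
  rw [ker_pi, ← annihilator_top, ← hs, annihilator_span]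
  exact (iInf_range' (fun m => ker (toSpanSingleton R M m)) s).symm

theorem isArtinianRing_of_faithfulSMul [Module.Finite R M] [IsArtinian R M] [FaithfulSMul R M] :
    IsArtinianRing R := by
  obtain ⟨n, s, hs⟩ := Module.Finite.exists_fin (R := R) (M := M)
  refine isArtinian_of_injective (LinearMap.pi fun i => toSpanSingleton R M (s i)) ?_
  rw [← ker_eq_bot, ker_pi_toSpanSingleton_eq_annihilator hs, Module.annihilator_eq_bot]
  infer_instance

end

theorem isArtinianRing_of_isSemidualizing_isQuasidualizing_general
    (R : Type) [CommRing R] [IsLocalRing R]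
    (L : Type) [AddCommGroup L] [Module R L]
    [Module (AdicCompletion (maximalIdeal R) R) L]
    [IsScalarTower R (AdicCompletion (maximalIdeal R) R) L]
    (h1 : IsSemidualizing R L) (h2 : IsQuasidualizing R L) :
    IsArtinianRing R := by
  obtain ⟨hfinite, hhomothety, -⟩ := h1
  obtain ⟨hartinian, -, -⟩ := h2
  have := faithfulSMul_of_injective_algebraMap_end hhomothety.injective
  exact isArtinianRing_of_faithfulSMul (M := L)

/-- **(Part of Proposition 2.2.)**  If there is an `R`-module `L` that is both
semidualizing and quasidualizing, then `R` is an artinian ring. -/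
theorem isArtinianRing_of_isSemidualizing_isQuasidualizing
    (R : Type) [CommRing R] [IsNoetherianRing R] [IsLocalRing R]
    (L : Type) [AddCommGroup L] [Module R L]
    [Module (AdicCompletion (maximalIdeal R) R) L]
    [IsScalarTower R (AdicCompletion (maximalIdeal R) R) L]
    (h1 : IsSemidualizing R L) (h2 : IsQuasidualizing R L) :
    IsArtinianRing R :=
  isArtinianRing_of_isSemidualizing_isQuasidualizing_general R L h1 h2
end
end
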